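/- Let m_a > 0, m_d ≥ 0, α ∈ (0,1), and w, d ≥ 0 with w+d ≤ 1. Define M(1) := [[m_a, m_d], [w, 1−w−d]] and M(2) := [[α·m_a, α·m_d], [w, 1−w−d]], and set c := det M(1)/m_a and c⁺ := max{c, 0}. Then, ℙ-almost surely, liminf_{n→∞} (1/n) · log‖M(I_1)·M(I_2)·…·M(I_n)‖ ≥ (s₂/(s₁+s₂))·log( tr M(1) − c⁺ ) + (s₁/(s₁+s₂))·log( tr M(2) − c⁺ ). -/

import Mathlib

/-!
Put `r := m_d / m_a`, `β := (1 - w - d) - c⁺` and `q_j := tr M(j) - c⁺ = M(j)₁₁ + β`.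
Both matrices are entrywise nonnegative, their first rows are proportional to `(1, r)`, and
`0 ≤ β ≤ min (1 - w - d) (r w)`; hence the row vector `ℓ = (1, r)` satisfies `ℓ M(j) ≥ q_j ℓ`
entrywise. Iterating, `ℓ M(I_1)⋯M(I_n) ≥ (q_{I_1}⋯q_{I_n}) ℓ`, so
`‖M(I_1)⋯M(I_n)‖ ≥ q_{I_1}⋯q_{I_n} / (1 + r)`, and the lower Lyapunov exponent is at least the
liminf of the Birkhoff averages of `log q_e` along `T`. By the lower half of Birkhoff's ergodic
theorem (a consequence of the maximal ergodic theorem) that liminf is a.s. at least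
`∫ log q_e dℙ = π₁ log q₁ + π₂ log q₂`.
-/

open MeasureTheory Filter Topology

/-- The entrywise sum-of-absolute-values "norm" of a real matrix. -/
noncomputable def matNorm {m n : Type*} [Fintype m] [Fintype n] (M : Matrix m n ℝ) : ℝ :=
  ∑ i, ∑ j, |M i j|

/-- The stationary distribution π = (s₂/(s₁+s₂), s₁/(s₁+s₂)) of the binary environment
(environment state "1" is index 0, state "2" is index 1). -/
noncomputable def envPi (s : Fin 2 → ℝ) : Fin 2 → ℝ :=
  ![s 1 / (s 0 + s 1), s 0 / (s 0 + s 1)]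

/-- The transition matrix P of the binary environment. -/
noncomputable def envP (s : Fin 2 → ℝ) : Matrix (Fin 2) (Fin 2) ℝ :=
  !![1 - s 0, s 0; s 1, 1 - s 1]

open Finset Matrix

lemma liminf_le_liminf_of_le_add {ι : Type*} {L : Filter ι} {u v w : ι → ℝ}
    (hw : Tendsto w L (𝓝 0)) (h : ∀ᶠ n in L, v n ≤ u n + w n)
    (hv : IsBoundedUnder (· ≥ ·) L v) (hu : IsCoboundedUnder (· ≥ ·) L u) :
    liminf v L ≤ liminf u L := by
  refine le_of_forall_pos_le_add fun ε hε => ?_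
  suffices liminf v L - ε ≤ liminf u L by linarith
  refine le_liminf_of_le hu ?_
  filter_upwards [eventually_lt_of_lt_liminf (by linarith : liminf v L - ε / 2 < liminf v L) hv,
    hw.eventually (gt_mem_nhds (half_pos hε)), h] with n hvn hwn hn
  linarith

section MatNorm

variable {l m n : Type*} [Fintype l] [Fintype m] [Fintype n]

lemma matNorm_nonneg (A : Matrix m n ℝ) : 0 ≤ matNorm A :=
  sum_nonneg fun _ _ => sum_nonneg fun _ _ => abs_nonneg _

lemma sum_abs_row_le_matNorm (A : Matrix m n ℝ) (i : m) : ∑ j, |A i j| ≤ matNorm A :=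
  single_le_sum (f := fun i => ∑ j, |A i j|) (fun _ _ => sum_nonneg fun _ _ => abs_nonneg _)
    (mem_univ i)

lemma abs_le_matNorm (A : Matrix m n ℝ) (i : m) (j : n) : |A i j| ≤ matNorm A :=
  (single_le_sum (fun _ _ => abs_nonneg _) (mem_univ j)).trans (sum_abs_row_le_matNorm A i)

lemma matNorm_mul_le (A : Matrix l m ℝ) (B : Matrix m n ℝ) :
    matNorm (A * B) ≤ matNorm A * matNorm B :=
  calc matNorm (A * B) ≤ ∑ i, ∑ j, ∑ k, |A i k| * |B k j| := by
        unfold matNorm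
        gcongr with i _ j _
        simpa only [mul_apply, abs_mul] using abs_sum_le_sum_abs (fun k => A i k * B k j) univ
    _ = ∑ i, ∑ k, |A i k| * ∑ j, |B k j| := by
        simp only [mul_sum]; exact sum_congr rfl fun _ _ => sum_comm
    _ ≤ ∑ i, ∑ k, |A i k| * matNorm B := by gcongr with i _ k _; exact sum_abs_row_le_matNorm B k
    _ = matNorm A * matNorm B := by simp only [matNorm, sum_mul]

lemma vecMul_apply_le_mul_matNorm (v : m → ℝ) (A : Matrix m n ℝ) (j : n) :
    (v ᵥ* A) j ≤ (∑ i, |v i|) * matNorm A :=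
  calc (v ᵥ* A) j ≤ ∑ i, |v i| * |A i j| := by
        simp only [vecMul, dotProduct, ← abs_mul]
        exact sum_le_sum fun _ _ => le_abs_self _
    _ ≤ (∑ i, |v i|) * matNorm A := by
        rw [sum_mul]; gcongr with i _; exact abs_le_matNorm A i j

omit [Fintype n] in
lemma vecMul_le_vecMul_of_nonneg {v w : m → ℝ} (h : v ≤ w) {A : Matrix m n ℝ}
    (hA : ∀ i j, 0 ≤ A i j) : v ᵥ* A ≤ w ᵥ* A := fun j => by
  simp only [vecMul, dotProduct]
  exact sum_le_sum fun i _ => mul_le_mul_of_nonneg_right (h i) (hA i j)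

end MatNorm

section ProdRange

variable {ι : Type*} [Fintype ι] [DecidableEq ι]

lemma matNorm_prod_range_le (A : ℕ → Matrix ι ι ℝ) {B : ℝ} (hAB : ∀ k, matNorm (A k) ≤ B)
    (n : ℕ) : matNorm ((List.range n).map A).prod ≤ matNorm (1 : Matrix ι ι ℝ) * B ^ n := by
  induction n with
  | zero => simp
  | succ n ih =>
    have hB : 0 ≤ B := (matNorm_nonneg _).trans (hAB 0)
    rw [List.prod_range_succ, pow_succ, ← mul_assoc]
    exact (matNorm_mul_le _ _).trans
      (mul_le_mul ih (hAB n) (matNorm_nonneg _) (mul_nonneg (matNorm_nonneg _) (by positivity)))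

lemma smul_le_vecMul_prod_range (A : ℕ → Matrix ι ι ℝ) (q : ℕ → ℝ) (v : ι → ℝ)
    (hA : ∀ k i j, 0 ≤ A k i j) (hq : ∀ k, 0 ≤ q k) (hv : ∀ k, q k • v ≤ v ᵥ* A k) (n : ℕ) :
    (∏ k ∈ range n, q k) • v ≤ v ᵥ* ((List.range n).map A).prod := by
  induction n with
  | zero => simp
  | succ n ih =>
    rw [List.prod_range_succ, ← vecMul_vecMul, prod_range_succ, mul_comm, mul_smul]
    calc q n • (∏ k ∈ range n, q k) • v = (∏ k ∈ range n, q k) • (q n • v) := smul_comm _ _ _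
      _ ≤ (∏ k ∈ range n, q k) • (v ᵥ* A n) :=
        smul_le_smul_of_nonneg_left (hv n) (prod_nonneg fun k _ => hq k)
      _ = ((∏ k ∈ range n, q k) • v) ᵥ* A n := (smul_vecMul _ _ _).symm
      _ ≤ (v ᵥ* ((List.range n).map A).prod) ᵥ* A n := vecMul_le_vecMul_of_nonneg ih (hA n)

lemma prod_le_mul_matNorm_prod_range (A : ℕ → Matrix ι ι ℝ) (q : ℕ → ℝ) (v : ι → ℝ)
    (hA : ∀ k i j, 0 ≤ A k i j) (hq : ∀ k, 0 ≤ q k) (hv : ∀ k, q k • v ≤ v ᵥ* A k)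
    {j : ι} (hvj : v j = 1) (n : ℕ) :
    ∏ k ∈ range n, q k ≤ (∑ i, |v i|) * matNorm ((List.range n).map A).prod :=
  calc ∏ k ∈ range n, q k = ((∏ k ∈ range n, q k) • v) j := by simp [hvj]
    _ ≤ (v ᵥ* ((List.range n).map A).prod) j := smul_le_vecMul_prod_range A q v hA hq hv n j
    _ ≤ _ := vecMul_apply_le_mul_matNorm _ _ _

lemma isBoundedUnder_le_log_matNorm_prod_range_div [Nonempty ι] (A : ℕ → Matrix ι ι ℝ) {B : ℝ}
    (hAB : ∀ k, matNorm (A k) ≤ B) (hpos : ∀ n, 0 < matNorm ((List.range n).map A).prod) :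
    IsBoundedUnder (· ≤ ·) atTop
      fun n : ℕ => Real.log (matNorm ((List.range n).map A).prod) / n := by
  set K := matNorm (1 : Matrix ι ι ℝ)
  set B' := max B 1
  have hK : 1 ≤ K := by
    obtain ⟨i⟩ := ‹Nonempty ι›
    simpa using abs_le_matNorm (1 : Matrix ι ι ℝ) i i
  refine isBoundedUnder_of_eventually_le (a := Real.log K + Real.log B') ?_
  filter_upwards [eventually_ge_atTop 1] with n hn
  have hn' : (1 : ℝ) ≤ n := by exact_mod_cast hn
  rw [div_le_iff₀ (by positivity)]
  calc Real.log (matNorm ((List.range n).map A).prod) ≤ Real.log (K * B' ^ n) :=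
        Real.log_le_log (hpos n)
          (matNorm_prod_range_le A (fun k => (hAB k).trans (le_max_left _ _)) n)
    _ = Real.log K + n * Real.log B' := by
        rw [Real.log_mul (by positivity) (by positivity), Real.log_pow]
    _ ≤ (Real.log K + Real.log B') * n := by
        nlinarith [Real.log_nonneg hK, Real.log_nonneg (le_max_right B 1)]

theorem liminf_mean_log_le_liminf_log_matNorm_prod_range (A : ℕ → Matrix ι ι ℝ) (q : ℕ → ℝ)
    (v : ι → ℝ) {q₀ B : ℝ} (hq₀ : 0 < q₀) (hq : ∀ k, q₀ ≤ q k) (hA : ∀ k i j, 0 ≤ A k i j)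
    (hAB : ∀ k, matNorm (A k) ≤ B) (hv : ∀ k, q k • v ≤ v ᵥ* A k) {j : ι} (hvj : v j = 1) :
    liminf (fun n : ℕ => (∑ k ∈ range n, Real.log (q k)) / n) atTop ≤
      liminf (fun n : ℕ => Real.log (matNorm ((List.range n).map A).prod) / n) atTop := by
  have : Nonempty ι := ⟨j⟩
  set K := ∑ i, |v i|
  have hK : 0 < K := lt_of_lt_of_le (by simp [hvj])
    (single_le_sum (fun i _ => abs_nonneg (v i)) (mem_univ j))
  have hqpos : ∀ k, 0 < q k := fun k => hq₀.trans_le (hq k)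
  have hprod : ∀ n, 0 < ∏ k ∈ range n, q k := fun n => prod_pos fun k _ => hqpos k
  have hlow := prod_le_mul_matNorm_prod_range A q v hA (fun k => (hqpos k).le) hv hvj
  have hpos : ∀ n, 0 < matNorm ((List.range n).map A).prod := fun n =>
    pos_of_mul_pos_right ((hprod n).trans_le (hlow n)) hK.le
  refine liminf_le_liminf_of_le_add (tendsto_const_div_atTop_nhds_zero_nat (Real.log K))
    (Eventually.of_forall fun n => ?_) ?_
    (isBoundedUnder_le_log_matNorm_prod_range_div A hAB hpos).isCoboundedUnder_ge
  · rw [← add_div]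
    gcongr
    rw [← Real.log_prod fun k _ => (hqpos k).ne', ← Real.log_mul (hpos n).ne' hK.ne', mul_comm]
    exact Real.log_le_log (hprod n) (hlow n)
  · refine isBoundedUnder_of_eventually_ge (a := Real.log q₀) ?_
    filter_upwards [eventually_ge_atTop 1] with n hn
    rw [le_div_iff₀ (by exact_mod_cast hn)]
    calc Real.log q₀ * n = ∑ k ∈ range n, Real.log q₀ := by simp [mul_comm]
      _ ≤ ∑ k ∈ range n, Real.log (q k) := sum_le_sum fun k _ => Real.log_le_log hq₀ (hq k)

end ProdRange

section Birkhoff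

variable {α : Type*} (T : α → α) (h : α → ℝ)

noncomputable def maxBirkhoffSum (N : ℕ) (x : α) : ℝ :=
  (range (N + 1)).sup' nonempty_range_add_one fun n => birkhoffSum T h n x

variable {T h}

lemma birkhoffSum_le_maxBirkhoffSum {n N : ℕ} (hn : n ≤ N) (x : α) :
    birkhoffSum T h n x ≤ maxBirkhoffSum T h N x :=
  le_sup' (fun n => birkhoffSum T h n x) (mem_range_succ_iff.2 hn)

lemma exists_maxBirkhoffSum_eq (N : ℕ) (x : α) :
    ∃ n ≤ N, maxBirkhoffSum T h N x = birkhoffSum T h n x := by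
  obtain ⟨n, hn, he⟩ := exists_mem_eq_sup' nonempty_range_add_one fun n => birkhoffSum T h n x
  exact ⟨n, mem_range_succ_iff.1 hn, he⟩

lemma maxBirkhoffSum_nonneg (N : ℕ) (x : α) : 0 ≤ maxBirkhoffSum T h N x := by
  simpa using birkhoffSum_le_maxBirkhoffSum (T := T) (h := h) (Nat.zero_le N) x

lemma monotone_maxBirkhoffSum (x : α) : Monotone fun N => maxBirkhoffSum T h N x := by
  intro N N' hN
  obtain ⟨n, hn, he⟩ := exists_maxBirkhoffSum_eq (T := T) (h := h) N x
  simpa only [he] using birkhoffSum_le_maxBirkhoffSum (hn.trans hN) x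

lemma maxBirkhoffSum_le_add_maxBirkhoffSum_apply {N : ℕ} {x : α}
    (hx : 0 < maxBirkhoffSum T h N x) :
    maxBirkhoffSum T h N x ≤ h x + maxBirkhoffSum T h N (T x) := by
  obtain ⟨n, hn, he⟩ := exists_maxBirkhoffSum_eq (T := T) (h := h) N x
  rw [he] at hx ⊢
  obtain _ | m := n
  · simp at hx
  · rw [birkhoffSum_succ']
    exact add_le_add le_rfl (birkhoffSum_le_maxBirkhoffSum (by omega) _)

lemma abs_maxBirkhoffSum_le (N : ℕ) (x : α) :
    |maxBirkhoffSum T h N x| ≤ birkhoffSum T (fun y => |h y|) N x := by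
  obtain ⟨n, hn, he⟩ := exists_maxBirkhoffSum_eq (T := T) (h := h) N x
  rw [he]
  exact (abs_sum_le_sum_abs _ _).trans
    (sum_le_sum_of_subset_of_nonneg (range_subset_range.2 hn) fun _ _ _ => abs_nonneg _)

variable [MeasurableSpace α]

lemma measurable_birkhoffSum (hT : Measurable T) (hh : Measurable h) (n : ℕ) :
    Measurable (birkhoffSum T h n) :=
  Finset.measurable_sum _ fun k _ => hh.comp (hT.iterate k)

lemma measurable_maxBirkhoffSum (hT : Measurable T) (hh : Measurable h) (N : ℕ) :
    Measurable (maxBirkhoffSum T h N) := by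
  have := Finset.measurable_sup' (nonempty_range_add_one (n := N))
    fun n _ => measurable_birkhoffSum hT hh n
  convert this using 1
  funext x
  exact (Finset.sup'_apply _ _ _).symm

variable {μ : Measure α}

lemma integrable_maxBirkhoffSum (hT : MeasurePreserving T μ μ) (hh : Measurable h)
    (hi : Integrable h μ) (N : ℕ) : Integrable (maxBirkhoffSum T h N) μ :=
  (integrable_finsetSum _ fun k _ => (hT.iterate k).integrable_comp_of_integrable hi.abs).mono'
    (measurable_maxBirkhoffSum hT.measurable hh N).aestronglyMeasurable
    (Eventually.of_forall fun x => abs_maxBirkhoffSum_le N x)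

lemma setIntegral_maxBirkhoffSum_pos_nonneg (hT : MeasurePreserving T μ μ) (hh : Measurable h)
    (hi : Integrable h μ) (N : ℕ) :
    0 ≤ ∫ x in {x | 0 < maxBirkhoffSum T h N x}, h x ∂μ := by
  set F := maxBirkhoffSum T h N
  set E := {x | 0 < F x}
  have hF := integrable_maxBirkhoffSum hT hh hi N
  have hFT : Integrable (fun x => F (T x)) μ := hT.integrable_comp_of_integrable hF
  have hE : MeasurableSet E :=
    measurableSet_lt measurable_const (measurable_maxBirkhoffSum hT.measurable hh N)
  have hFF : ∫ x, F (T x) ∂μ = ∫ x, F x ∂μ := by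
    rw [← integral_map hT.measurable.aemeasurable
      (measurable_maxBirkhoffSum hT.measurable hh N).aestronglyMeasurable, hT.map_eq]
  calc (0 : ℝ) = ∫ x, F x ∂μ - ∫ x, F (T x) ∂μ := by rw [hFF, sub_self]
    _ ≤ ∫ x in E, F x ∂μ - ∫ x in E, F (T x) ∂μ := by
        have hFE : ∫ x in E, F x ∂μ = ∫ x, F x ∂μ :=
          setIntegral_eq_integral_of_forall_compl_eq_zero fun x hx =>
            le_antisymm (not_lt.1 hx) (maxBirkhoffSum_nonneg N x)
        have hFTE : ∫ x in E, F (T x) ∂μ ≤ ∫ x, F (T x) ∂μ :=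
          setIntegral_le_integral hFT (Eventually.of_forall fun x => maxBirkhoffSum_nonneg N (T x))
        linarith
    _ = ∫ x in E, F x - F (T x) ∂μ := (integral_sub hF.integrableOn hFT.integrableOn).symm
    _ ≤ ∫ x in E, h x ∂μ := setIntegral_mono_on (hF.sub hFT).integrableOn hi.integrableOn hE
        fun x hx => by linarith [maxBirkhoffSum_le_add_maxBirkhoffSum_apply hx]

/-- The maximal ergodic theorem. -/
theorem MeasureTheory.MeasurePreserving.setIntegral_exists_birkhoffSum_pos_nonneg
    (hT : MeasurePreserving T μ μ) (hh : Measurable h) (hi : Integrable h μ) :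
    0 ≤ ∫ x in {x | ∃ n, 0 < birkhoffSum T h n x}, h x ∂μ := by
  have hU : {x | ∃ n, 0 < birkhoffSum T h n x} = ⋃ N, {x | 0 < maxBirkhoffSum T h N x} := by
    ext x
    rw [Set.mem_iUnion]
    constructor
    · exact fun ⟨n, hn⟩ => ⟨n, hn.trans_le (birkhoffSum_le_maxBirkhoffSum le_rfl x)⟩
    · rintro ⟨N, hN⟩
      obtain ⟨n, -, he⟩ := exists_maxBirkhoffSum_eq (T := T) (h := h) N x
      exact ⟨n, he ▸ hN⟩
  rw [hU]
  refine ge_of_tendsto (tendsto_setIntegral_of_monotone (fun N => ?_) (fun N N' hN x hx => ?_)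
    hi.integrableOn) (Eventually.of_forall (setIntegral_maxBirkhoffSum_pos_nonneg hT hh hi))
  · exact measurableSet_lt measurable_const (measurable_maxBirkhoffSum hT.measurable hh N)
  · exact hx.trans_le (monotone_maxBirkhoffSum x hN)

end Birkhoff

section BirkhoffAverage

variable {α : Type*} {T : α → α} {f : α → ℝ} {C : ℝ}

lemma abs_birkhoffAverage_le (hf : ∀ x, |f x| ≤ C) (n : ℕ) (x : α) :
    |birkhoffAverage ℝ T f n x| ≤ C := by
  rcases Nat.eq_zero_or_pos n with rfl | hn
  · simpa using (abs_nonneg _).trans (hf x)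
  rw [birkhoffAverage, smul_eq_mul, abs_mul, abs_inv, Nat.abs_cast, inv_mul_le_iff₀ (by positivity)]
  calc |birkhoffSum T f n x| ≤ ∑ k ∈ range n, |f (T^[k] x)| := abs_sum_le_sum_abs _ _
    _ ≤ ∑ k ∈ range n, C := sum_le_sum fun k _ => hf _
    _ = n * C := by simp

lemma isBoundedUnder_abs_birkhoffAverage (hf : ∀ x, |f x| ≤ C) (x : α) :
    IsBoundedUnder (· ≤ ·) atTop fun n => |birkhoffAverage ℝ T f n x| :=
  isBoundedUnder_of ⟨C, fun n => abs_birkhoffAverage_le hf n x⟩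

lemma liminf_birkhoffAverage_apply (hf : ∀ x, |f x| ≤ C) (x : α) :
    liminf (fun n => birkhoffAverage ℝ T f n (T x)) atTop =
      liminf (fun n => birkhoffAverage ℝ T f n x) atTop := by
  have hb : Bornology.IsBounded (Set.range f) :=
    isBounded_iff_forall_norm_le.2 ⟨C, by rintro _ ⟨y, rfl⟩; exact hf y⟩
  have hd := tendsto_birkhoffAverage_apply_sub_birkhoffAverage' (𝕜 := ℝ) hb T x
  have hTx := isBoundedUnder_le_abs.1 (isBoundedUnder_abs_birkhoffAverage (T := T) hf (T x))
  have hx := isBoundedUnder_le_abs.1 (isBoundedUnder_abs_birkhoffAverage (T := T) hf x)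
  refine le_antisymm (liminf_le_liminf_of_le_add (by simpa using hd)
    (Eventually.of_forall fun n => by simp) hTx.2 hx.1.isCoboundedUnder_ge) ?_
  exact liminf_le_liminf_of_le_add (by simpa using hd.neg) (Eventually.of_forall fun n => by simp)
    hx.2 hTx.1.isCoboundedUnder_ge

lemma exists_birkhoffSum_const_sub_pos {a : ℝ} (hf : ∀ x, |f x| ≤ C) {x : α}
    (ha : liminf (fun n => birkhoffAverage ℝ T f n x) atTop < a) :
    ∃ n, 0 < birkhoffSum T (fun y => a - f y) n x := by
  have hfreq := frequently_lt_of_liminf_lt (isBoundedUnder_le_abs.1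
    (isBoundedUnder_abs_birkhoffAverage (T := T) hf x)).1.isCoboundedUnder_ge ha
  obtain ⟨n, hlt, hn⟩ := (hfreq.and_eventually (eventually_ge_atTop 1)).exists
  refine ⟨n, ?_⟩
  have hn' : (0 : ℝ) < n := by exact_mod_cast hn
  rw [birkhoffAverage, smul_eq_mul, inv_mul_lt_iff₀ hn'] at hlt
  simp only [birkhoffSum, sum_sub_distrib, sum_const, card_range, nsmul_eq_mul]
  exact sub_pos.2 hlt

variable [MeasurableSpace α] {μ : Measure α} [IsProbabilityMeasure μ]

theorem Ergodic.integral_le_liminf_birkhoffAverage (hT : Ergodic T μ) (hfm : Measurable f)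
    (hf : ∀ x, |f x| ≤ C) :
    ∀ᵐ x ∂μ, ∫ y, f y ∂μ ≤ liminf (fun n => birkhoffAverage ℝ T f n x) atTop := by
  set L := fun x => liminf (fun n => birkhoffAverage ℝ T f n x) atTop
  have hLm : Measurable L := Measurable.liminf fun n =>
    (measurable_birkhoffSum hT.measurable hfm n).const_smul (n : ℝ)⁻¹
  obtain ⟨c, hc⟩ := hT.toPreErgodic.ae_eq_const_of_ae_eq_comp hLm
    (funext fun x => liminf_birkhoffAverage_apply hf x)
  suffices ∫ y, f y ∂μ ≤ c by
    filter_upwards [hc] with x hx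
    exact this.trans_eq hx.symm
  by_contra! hlt
  obtain ⟨a, hca, haf⟩ := exists_between hlt
  have hfi : Integrable f μ := .of_bound hfm.aestronglyMeasurable C (.of_forall hf)
  have hg : Integrable (fun y => a - f y) μ := (integrable_const a).sub hfi
  have hfull : ∀ᵐ x ∂μ, x ∈ {x | ∃ n, 0 < birkhoffSum T (fun y => a - f y) n x} := by
    filter_upwards [hc] with x hx
    exact exists_birkhoffSum_const_sub_pos hf (hx.trans_lt hca)
  have hmax := hT.toMeasurePreserving.setIntegral_exists_birkhoffSum_pos_nonneg
    (h := fun y => a - f y) (measurable_const.sub hfm) hg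
  rw [Measure.restrict_eq_self_of_ae_mem hfull, integral_sub (integrable_const a) hfi,
    integral_const, probReal_univ, one_smul] at hmax
  linarith

end BirkhoffAverage

lemma integral_comp_eq_sum {Ω ι : Type*} [MeasurableSpace Ω] [Fintype ι] [MeasurableSpace ι]
    [MeasurableSingletonClass ι] {μ : Measure Ω} [IsFiniteMeasure μ] {e : Ω → ι} (he : Measurable e)
    (φ : ι → ℝ) : ∫ ω, φ (e ω) ∂μ = ∑ i, μ.real (e ⁻¹' {i}) * φ i := by
  rw [← integral_map he.aemeasurable (measurable_of_finite φ).aestronglyMeasurable,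
    integral_fintype Integrable.of_finite]
  simp only [measureReal_def, Measure.map_apply he (measurableSet_singleton _), smul_eq_mul]

section Environment

variable {s : Fin 2 → ℝ}

lemma envPi_nonneg (hs : ∀ i, s i ∈ Set.Ioc (0 : ℝ) 1) (i : Fin 2) : 0 ≤ envPi s i := by
  have := (hs 0).1; have := (hs 1).1
  fin_cases i <;> simp [envPi] <;> positivity

lemma envP_nonneg (hs : ∀ i, s i ∈ Set.Ioc (0 : ℝ) 1) (i j : Fin 2) : 0 ≤ envP s i j := by
  fin_cases i <;> fin_cases j <;> simp [envP] <;>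
    linarith [Set.mem_Ioc.1 (hs 0), Set.mem_Ioc.1 (hs 1)]

lemma envP_apply_zero_add_apply_one (i : Fin 2) : envP s i 0 + envP s i 1 = 1 := by
  fin_cases i <;> simp [envP]

variable {Ω : Type*} [MeasurableSpace Ω] {μ : Measure Ω} {T : Ω → Ω} {e : Ω → Fin 2}

lemma measureReal_preimage_singleton_eq_envPi (hT : Measurable T) (he : Measurable e)
    (hs : ∀ i, s i ∈ Set.Ioc (0 : ℝ) 1)
    (henv : ∀ i j : Fin 2, μ {ω | e ω = i ∧ e (T ω) = j} = ENNReal.ofReal (envPi s i * envP s i j))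
    (i : Fin 2) : μ.real (e ⁻¹' {i}) = envPi s i := by
  have hsplit : e ⁻¹' {i} = {ω | e ω = i ∧ e (T ω) = 0} ∪ {ω | e ω = i ∧ e (T ω) = 1} := by
    ext ω
    simp only [Set.mem_preimage, Set.mem_singleton_iff, Set.mem_union, Set.mem_ofPred_eq]
    have : e (T ω) = 0 ∨ e (T ω) = 1 := by omega
    tauto
  have hdisj : Disjoint {ω | e ω = i ∧ e (T ω) = 0} {ω | e ω = i ∧ e (T ω) = 1} :=
    Set.disjoint_left.2 fun ω h0 h1 => by simp [h0.2] at h1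
  have hmeas : MeasurableSet {ω | e ω = i ∧ e (T ω) = 1} :=
    (he (measurableSet_singleton i)).inter ((he.comp hT) (measurableSet_singleton 1))
  rw [measureReal_def, hsplit, measure_union hdisj hmeas, henv, henv,
    ← ENNReal.ofReal_add (mul_nonneg (envPi_nonneg hs i) (envP_nonneg hs i 0))
      (mul_nonneg (envPi_nonneg hs i) (envP_nonneg hs i 1)),
    ← mul_add, envP_apply_zero_add_apply_one, mul_one, ENNReal.toReal_ofReal (envPi_nonneg hs i)]

lemma integral_comp_eq_sum_envPi [IsFiniteMeasure μ] (hT : Measurable T) (he : Measurable e)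
    (hs : ∀ i, s i ∈ Set.Ioc (0 : ℝ) 1)
    (henv : ∀ i j : Fin 2, μ {ω | e ω = i ∧ e (T ω) = j} = ENNReal.ofReal (envPi s i * envP s i j))
    (φ : Fin 2 → ℝ) : ∫ ω, φ (e ω) ∂μ = ∑ i, envPi s i * φ i := by
  simp only [integral_comp_eq_sum he, measureReal_preimage_singleton_eq_envPi hT he hs henv]

end Environment

lemma smul_le_vecMul_of_fin_two {a b w z r β : ℝ} (hr : 0 ≤ r) (hb : r * a ≤ b)
    (hβw : β ≤ r * w) (hβz : β ≤ z) : (a + β) • ![1, r] ≤ ![1, r] ᵥ* !![a, b; w, z] := by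
  intro j
  fin_cases j <;> simp [vecMul, dotProduct, Fin.sum_univ_two] <;>
    nlinarith [mul_le_mul_of_nonneg_left hβz hr]

section Switcher

variable {ma md α w z : ℝ}

def switcher (ma md α w z : ℝ) : Fin 2 → Matrix (Fin 2) (Fin 2) ℝ :=
  ![!![ma, md; w, z], !![α * ma, α * md; w, z]]

lemma switcher_nonneg (hma : 0 ≤ ma) (hmd : 0 ≤ md) (hα : 0 ≤ α) (hw : 0 ≤ w) (hz : 0 ≤ z)
    (j i k : Fin 2) : 0 ≤ switcher ma md α w z j i k := by
  fin_cases j <;> fin_cases i <;> fin_cases k <;> simp [switcher] <;> positivity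

lemma switcher_growth (hma : 0 < ma) (hmd : 0 ≤ md) (hα : 0 < α) (hw : 0 ≤ w) (hz : 0 ≤ z)
    (j : Fin 2) :
    0 < (switcher ma md α w z j).trace - max ((switcher ma md α w z 0).det / ma) 0 ∧
      ((switcher ma md α w z j).trace - max ((switcher ma md α w z 0).det / ma) 0) • ![1, md / ma]
        ≤ ![1, md / ma] ᵥ* switcher ma md α w z j := by
  have hdet : (switcher ma md α w z 0).det / ma = z - md / ma * w := by
    simp [switcher, det_fin_two]
    field_simp
  have hr : 0 ≤ md / ma := div_nonneg hmd hma.le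
  set β := z - max (z - md / ma * w) 0
  have hβ0 : 0 ≤ β := sub_nonneg.2 (max_le (by linarith [mul_nonneg hr hw]) hz)
  have hβz : β ≤ z := by simp only [β]; linarith [le_max_right (z - md / ma * w) 0]
  have hβw : β ≤ md / ma * w := by simp only [β]; linarith [le_max_left (z - md / ma * w) 0]
  fin_cases j
  · have htr : (switcher ma md α w z 0).trace = ma + z := by simp [switcher, trace_fin_two]
    simp only [Fin.zero_eta, htr, hdet, add_sub_assoc]
    refine ⟨by positivity, smul_le_vecMul_of_fin_two hr ?_ hβw hβz⟩
    rw [div_mul_cancel₀ md hma.ne']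
  · have htr : (switcher ma md α w z 1).trace = α * ma + z := by simp [switcher, trace_fin_two]
    simp only [Fin.mk_one, htr, hdet, add_sub_assoc]
    refine ⟨by positivity, smul_le_vecMul_of_fin_two hr ?_ hβw hβz⟩
    rw [mul_left_comm, div_mul_cancel₀ md hma.ne']

end Switcher

theorem stochastic_switcher_liminf_lower_bound_general
    {Ω : Type*} [MeasurableSpace Ω] (μ : Measure Ω) [IsProbabilityMeasure μ]
    (T : Ω → Ω) (hT : Ergodic T μ) (e : Ω → Fin 2) (he : Measurable e)
    (s : Fin 2 → ℝ) (hs : ∀ i, s i ∈ Set.Ioc (0 : ℝ) 1)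
    (henv : ∀ i j : Fin 2, μ {ω | e ω = i ∧ e (T ω) = j}
      = ENNReal.ofReal (envPi s i * envP s i j))
    (ma md α w d : ℝ) (hma : 0 < ma) (hmd : 0 ≤ md) (hα : α ∈ Set.Ioo (0 : ℝ) 1)
    (hw : 0 ≤ w) (hwd : w + d ≤ 1)
    (M : Fin 2 → Matrix (Fin 2) (Fin 2) ℝ)
    (hM : M = ![!![ma, md; w, 1 - w - d], !![α * ma, α * md; w, 1 - w - d]]) :
    ∀ᵐ ω ∂μ,
      s 1 / (s 0 + s 1) * Real.log ((M 0).trace - max ((M 0).det / ma) 0)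
        + s 0 / (s 0 + s 1) * Real.log ((M 1).trace - max ((M 0).det / ma) 0)
      ≤ Filter.liminf (fun n : ℕ =>
          Real.log (matNorm (((List.range n).map (fun k => M (e (T^[k+1] ω)))).prod)) / n)
        atTop := by
  obtain rfl : M = switcher ma md α w (1 - w - d) := hM
  set M := switcher ma md α w (1 - w - d)
  set q : Fin 2 → ℝ := fun j => (M j).trace - max ((M 0).det / ma) 0
  have hq := switcher_growth hma hmd hα.1 hw (by linarith : 0 ≤ 1 - w - d)
  have hM := switcher_nonneg hma.le hmd hα.1.le hw (by linarith : 0 ≤ 1 - w - d)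
  set φ : Fin 2 → ℝ := fun j => Real.log (q j)
  have hint := integral_comp_eq_sum_envPi hT.measurable he hs henv φ
  rw [Fin.sum_univ_two] at hint
  have hφ (ω : Ω) : |(φ ∘ e) ω| ≤ ∑ j, |φ j| :=
    single_le_sum (fun j _ => abs_nonneg (φ j)) (mem_univ _)
  filter_upwards [hT.quasiMeasurePreserving.ae
    (hT.integral_le_liminf_birkhoffAverage ((measurable_of_finite φ).comp he) hφ)] with ω hω
  have hgrowth := liminf_mean_log_le_liminf_log_matNorm_prod_range
    (fun k => M (e (T^[k+1] ω))) (fun k => q (e (T^[k+1] ω))) ![1, md / ma]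
    (q₀ := univ.inf' univ_nonempty q) (B := ∑ j, matNorm (M j))
    ((lt_inf'_iff _).2 fun j _ => (hq j).1) (fun k => inf'_le _ (mem_univ _)) (fun k => hM _)
    (fun k => single_le_sum (fun j _ => matNorm_nonneg (M j)) (mem_univ _)) (fun k => (hq _).2)
    (j := 0) rfl
  have havg : (fun n => birkhoffAverage ℝ T (φ ∘ e) n (T ω)) =
      fun n : ℕ => (∑ k ∈ range n, Real.log (q (e (T^[k+1] ω)))) / n := by
    funext n
    simp [birkhoffAverage, birkhoffSum, div_eq_inv_mul, φ, Function.iterate_succ_apply]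
  rw [havg] at hω
  exact hint.symm.trans_le (hω.trans hgrowth)

/-- Lower bound for the Lyapunov exponent of the stochastic switcher with
environment-independent waking and death probabilities (Theorem 1.4 / `thm:dirac-lower-bound`). -/
theorem stochastic_switcher_liminf_lower_bound
    {Ω : Type*} [MeasurableSpace Ω] (μ : Measure Ω) [IsProbabilityMeasure μ]
    (T : Ω → Ω) (hT : Ergodic T μ) (e : Ω → Fin 2) (he : Measurable e)
    (s : Fin 2 → ℝ) (hs : ∀ i, s i ∈ Set.Ioc (0 : ℝ) 1) (hss : s 0 * s 1 < 1)
    (henv : ∀ i j : Fin 2, μ {ω | e ω = i ∧ e (T ω) = j}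
      = ENNReal.ofReal (envPi s i * envP s i j))
    (ma md α w d : ℝ) (hma : 0 < ma) (hmd : 0 ≤ md) (hα : α ∈ Set.Ioo (0 : ℝ) 1)
    (hw : 0 ≤ w) (hd : 0 ≤ d) (hwd : w + d ≤ 1)
    (M : Fin 2 → Matrix (Fin 2) (Fin 2) ℝ)
    (hM : M = ![!![ma, md; w, 1 - w - d], !![α * ma, α * md; w, 1 - w - d]]) :
    ∀ᵐ ω ∂μ,
      s 1 / (s 0 + s 1) * Real.log ((M 0).trace - max ((M 0).det / ma) 0)
        + s 0 / (s 0 + s 1) * Real.log ((M 1).trace - max ((M 0).det / ma) 0)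
      ≤ Filter.liminf (fun n : ℕ =>
          Real.log (matNorm (((List.range n).map (fun k => M (e (T^[k+1] ω)))).prod)) / n)
        atTop :=
  stochastic_switcher_liminf_lower_bound_general μ T hT e he s hs henv ma md α w d hma hmd hα hw hwd
    M hM
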